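/- Let n ∈ ℕ, j ≤ n and M > 0. There exists a constant C = C(M,j) > 0 such that for every j-dimensional linear subspace L ⊆ ℝⁿ, every Lipschitz function g : L → L^⊥ with Lipschitz constant M, and every set A ⊆ graph(g) with H^j(A) < ∞, one has P^j(A) ≤ C · H^j(A), where P^j is j-dimensional packing measure and H^j is j-dimensional Hausdorff measure. -/

import Mathlib

open Metric Set MeasureTheory ENNReal NNReal

attribute [local instance] Classical.propDecidable

noncomputable section

namespace ReifenbergPaper

/-- The closed `r`-neighbourhood `E^r = {x : dist (x, E) ≤ r}` of `E ⊆ ℝⁿ`. -/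
def nbhd {n : ℕ} (E : Set (EuclideanSpace ℝ (Fin n))) (r : ℝ) :
    Set (EuclideanSpace ℝ (Fin n)) :=
  {x | Metric.infDist x E ≤ r}

/-- The affine plane through `x` with direction the linear subspace `W`. -/
def affPlane {n : ℕ} (x : EuclideanSpace ℝ (Fin n))
    (W : Submodule ℝ (EuclideanSpace ℝ (Fin n))) : Set (EuclideanSpace ℝ (Fin n)) :=
  {z | z - x ∈ W}

/-- `A ∈ R(w,∅,δ;j)`. -/
def RwEmpty {n : ℕ} (j : ℕ) (δ : ℝ) (A : Set (EuclideanSpace ℝ (Fin n))) : Prop :=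
  ∀ y ∈ A, ∃ ρy > (0:ℝ), ∀ ρ ∈ Set.Ioc (0:ℝ) ρy,
    ∃ W : Submodule ℝ (EuclideanSpace ℝ (Fin n)), Module.finrank ℝ W = j ∧
      Metric.closedBall y ρ ∩ A ⊆ nbhd (affPlane y W) (δ * ρ)

/-- `A ∈ R(w,ρ,δ;j)`. -/
def RwRho {n : ℕ} (j : ℕ) (δ : ℝ) (A : Set (EuclideanSpace ℝ (Fin n))) : Prop :=
  ∀ y ∈ A, ∃ ρy > (0:ℝ), ∀ x ∈ Metric.closedBall y ρy ∩ A, ∀ ρ ∈ Set.Ioc (0:ℝ) ρy,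
    ∃ W : Submodule ℝ (EuclideanSpace ℝ (Fin n)), Module.finrank ℝ W = j ∧
      Metric.closedBall x ρ ∩ A ⊆ nbhd (affPlane x W) (δ * ρ)

/-- `A ∈ R(w,ρ0,δ;j)`. -/
def RwRho0 {n : ℕ} (j : ℕ) (δ : ℝ) (A : Set (EuclideanSpace ℝ (Fin n))) : Prop :=
  ∃ ρ0 > (0:ℝ), (∃ c, A ⊆ Metric.closedBall c ρ0) ∧
    ∀ y ∈ A, ∀ ρ ∈ Set.Ioc (0:ℝ) ρ0,
      ∃ W : Submodule ℝ (EuclideanSpace ℝ (Fin n)), Module.finrank ℝ W = j ∧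
        Metric.closedBall y ρ ∩ A ⊆ nbhd (affPlane y W) (δ * ρ)

/-- `A ∈ R(s,∅,δ;j)`. -/
def RsEmpty {n : ℕ} (j : ℕ) (δ : ℝ) (A : Set (EuclideanSpace ℝ (Fin n))) : Prop :=
  ∀ y ∈ A, ∃ ρy > (0:ℝ), ∃ W : Submodule ℝ (EuclideanSpace ℝ (Fin n)),
    Module.finrank ℝ W = j ∧ ∀ ρ ∈ Set.Ioc (0:ℝ) ρy,
      Metric.closedBall y ρ ∩ A ⊆ nbhd (affPlane y W) (δ * ρ)

/-- `A ∈ R(s,ρ,δ;j)`. -/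
def RsRho {n : ℕ} (j : ℕ) (δ : ℝ) (A : Set (EuclideanSpace ℝ (Fin n))) : Prop :=
  ∀ y ∈ A, ∃ ρy > (0:ℝ), ∃ W : Submodule ℝ (EuclideanSpace ℝ (Fin n)),
    Module.finrank ℝ W = j ∧
    ∀ x ∈ Metric.closedBall y ρy ∩ A, ∀ ρ ∈ Set.Ioc (0:ℝ) ρy,
      Metric.closedBall x ρ ∩ A ⊆ nbhd (affPlane x W) (δ * ρ)

/-- `A ∈ R(s,ρ0,δ;j)`. -/
def RsRho0 {n : ℕ} (j : ℕ) (δ : ℝ) (A : Set (EuclideanSpace ℝ (Fin n))) : Prop :=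
  ∃ ρ0 > (0:ℝ), (∃ c, A ⊆ Metric.closedBall c ρ0) ∧
    ∃ W : Submodule ℝ (EuclideanSpace ℝ (Fin n)), Module.finrank ℝ W = j ∧
      ∀ x ∈ A, ∀ ρ ∈ Set.Ioc (0:ℝ) ρ0,
        Metric.closedBall x ρ ∩ A ⊆ nbhd (affPlane x W) (δ * ρ)

/-- The weak/strong parameter `α`. -/
inductive Alpha | w | s

/-- The uniformity parameter `β ∈ {∅, ρ, ρ0}`. -/
inductive Beta | none | rho | rho0

/-- `A ∈ R(α,β,δ;j)` for a fixed approximation constant `δ`. -/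
def RDelta {n : ℕ} (α : Alpha) (β : Beta) (j : ℕ) (δ : ℝ)
    (A : Set (EuclideanSpace ℝ (Fin n))) : Prop :=
  match α, β with
  | .w, .none => RwEmpty j δ A
  | .w, .rho  => RwRho j δ A
  | .w, .rho0 => RwRho0 j δ A
  | .s, .none => RsEmpty j δ A
  | .s, .rho  => RsRho j δ A
  | .s, .rho0 => RsRho0 j δ A

/-- `A ∈ R(α,β,γ;j)` where `γ : Option ℝ`, with `Option.none` denoting the fine
property (`δ`-approximation for every `δ ∈ (0,1)`) and `Option.some δ` denoting the
`δ`-approximation property. -/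
def RGamma {n : ℕ} (α : Alpha) (β : Beta) (j : ℕ) (γ : Option ℝ)
    (A : Set (EuclideanSpace ℝ (Fin n))) : Prop :=
  match γ with
  | Option.none => ∀ δ ∈ Set.Ioo (0:ℝ) 1, RDelta α β j δ A
  | Option.some δ => RDelta α β j δ A

/-- `γ ∈ Δ := {fine} ∪ (0,1)`. -/
def memDelta (γ : Option ℝ) : Prop :=
  γ = Option.none ∨ ∃ d ∈ Set.Ioo (0:ℝ) 1, γ = Option.some d

/-- The graph `{x + g x : x ∈ W}` of a function `g : W → Wᗮ`. -/
def lipGraph {n : ℕ} (W : Submodule ℝ (EuclideanSpace ℝ (Fin n)))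
    (g : W → Wᗮ) : Set (EuclideanSpace ℝ (Fin n)) :=
  {p | ∃ x : W, p = (x : EuclideanSpace ℝ (Fin n)) + (g x : EuclideanSpace ℝ (Fin n))}

/-- `N_ε(E)`: the smallest number of sets of diameter at most `ε` needed to cover `E`,
as an element of `ℝ≥0∞` (`⊤` if no finite cover exists). -/
def coverNum {n : ℕ} (E : Set (EuclideanSpace ℝ (Fin n))) (ε : ℝ) : ℝ≥0∞ :=
  ⨅ (s : Finset (Set (EuclideanSpace ℝ (Fin n)))) (_ : E ⊆ ⋃ t ∈ s, t)
    (_ : ∀ t ∈ s, Metric.diam t ≤ ε), (s.card : ℝ≥0∞)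

/-- Upper Minkowski (box-counting) dimension
`limsup_{ε → 0⁺} log N_ε(E) / (- log ε)`, with the convention that the empty set
has dimension `0`. -/
def upperMinkDim {n : ℕ} (E : Set (EuclideanSpace ℝ (Fin n))) : ℝ :=
  if E = ∅ then 0 else
    Filter.limsup (fun ε : ℝ => Real.log (coverNum E ε).toReal / (-Real.log ε))
      (nhdsWithin 0 (Set.Ioi 0))

/-- Lower Minkowski (box-counting) dimension
`liminf_{ε → 0⁺} log N_ε(E) / (- log ε)`, with the convention that the empty set
has dimension `0`. -/
def lowerMinkDim {n : ℕ} (E : Set (EuclideanSpace ℝ (Fin n))) : ℝ :=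
  if E = ∅ then 0 else
    Filter.liminf (fun ε : ℝ => Real.log (coverNum E ε).toReal / (-Real.log ε))
      (nhdsWithin 0 (Set.Ioi 0))

/-- Packing dimension:
`dim_P A = inf { sup_i dim̄_M A_i : A = ⋃ i, A_i, each A_i bounded }`. -/
def packDim {n : ℕ} (A : Set (EuclideanSpace ℝ (Fin n))) : ℝ :=
  sInf {d : ℝ | ∃ F : ℕ → Set (EuclideanSpace ℝ (Fin n)),
    A = ⋃ i, F i ∧ (∀ i, Bornology.IsBounded (F i)) ∧ ∀ i, upperMinkDim (F i) ≤ d}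

/-- `D` is an `η`-packing of `E`: a countable collection of pairwise disjoint closed
balls centred at points of `E` with (positive) radii at most `η`, coded as a set of
(centre, radius) pairs. -/
def IsPacking {n : ℕ} (η : ℝ) (E : Set (EuclideanSpace ℝ (Fin n)))
    (D : Set (EuclideanSpace ℝ (Fin n) × ℝ)) : Prop :=
  D.Countable ∧ (∀ p ∈ D, p.1 ∈ E ∧ 0 < p.2 ∧ p.2 ≤ η) ∧
    D.Pairwise fun p q => Disjoint (Metric.closedBall p.1 p.2) (Metric.closedBall q.1 q.2)

/-- The packing premeasure `P^s_η(E) = sup { Σ_i (diam B_i)^s }` over `η`-packings. -/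
def packPre {n : ℕ} (s : ℕ) (η : ℝ) (E : Set (EuclideanSpace ℝ (Fin n))) : ℝ≥0∞ :=
  ⨆ (D : Set (EuclideanSpace ℝ (Fin n) × ℝ)) (_ : IsPacking η E D),
    ∑' p : D, (ENNReal.ofReal (Metric.diam (Metric.closedBall p.1.1 p.1.2))) ^ s

/-- `P^s_0(E) = lim_{η ↓ 0} P^s_η(E) = inf_{η > 0} P^s_η(E)`. -/
def packPre0 {n : ℕ} (s : ℕ) (E : Set (EuclideanSpace ℝ (Fin n))) : ℝ≥0∞ :=
  ⨅ (η : ℝ) (_ : 0 < η), packPre s η E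

/-- The `s`-dimensional packing measure
`P^s(E) = inf { Σ_i P^s_0(E_i) : E ⊆ ⋃ i, E_i }`. -/
def packMeasure {n : ℕ} (s : ℕ) (E : Set (EuclideanSpace ℝ (Fin n))) : ℝ≥0∞ :=
  ⨅ (F : ℕ → Set (EuclideanSpace ℝ (Fin n))) (_ : E ⊆ ⋃ i, F i), ∑' i, packPre0 s (F i)

/-- `A` is `(μ, j)`-rectifiable: `A ⊆ M₀ ∪ ⋃ i, f i '' ℝ^j` with `μ M₀ = 0` and each
`f i` Lipschitz. -/
def Rectifiable {n : ℕ} (μ : Set (EuclideanSpace ℝ (Fin n)) → ℝ≥0∞) (j : ℕ)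
    (A : Set (EuclideanSpace ℝ (Fin n))) : Prop :=
  ∃ (M₀ : Set (EuclideanSpace ℝ (Fin n)))
    (f : ℕ → EuclideanSpace ℝ (Fin j) → EuclideanSpace ℝ (Fin n)),
    μ M₀ = 0 ∧ (∀ i, ∃ K : ℝ≥0, LipschitzWith K (f i)) ∧
      A ⊆ M₀ ∪ ⋃ i, Set.range (f i)

/-- `A` has weakly locally finite `μ` measure. -/
def WeaklyLocFinite {n : ℕ} (μ : Set (EuclideanSpace ℝ (Fin n)) → ℝ≥0∞)
    (A : Set (EuclideanSpace ℝ (Fin n))) : Prop :=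
  ∀ y ∈ A, ∃ ρ > (0:ℝ), μ (Metric.closedBall y ρ ∩ A) < ⊤

/-- `A` has strongly locally finite `μ` measure. -/
def StronglyLocFinite {n : ℕ} (μ : Set (EuclideanSpace ℝ (Fin n)) → ℝ≥0∞)
    (A : Set (EuclideanSpace ℝ (Fin n))) : Prop :=
  ∀ K : Set (EuclideanSpace ℝ (Fin n)), IsCompact K → μ (K ∩ A) < ⊤

/-- `A` satisfies the two-sided `wρ j` property with respect to `ε`. -/
def TwoSidedWRho {n : ℕ} (j : ℕ) (ε : ℝ) (A : Set (EuclideanSpace ℝ (Fin n))) : Prop :=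
  ∀ y ∈ A, ∃ ρy > (0:ℝ), ∀ x ∈ A ∩ Metric.closedBall y ρy, ∀ ρ ∈ Set.Ioc (0:ℝ) ρy,
    ∃ (x0 : EuclideanSpace ℝ (Fin n)) (W : Submodule ℝ (EuclideanSpace ℝ (Fin n))),
      Module.finrank ℝ W = j ∧
      Metric.hausdorffDist (A ∩ Metric.closedBall x ρ)
        (affPlane x0 W ∩ Metric.closedBall x ρ) < ε * ρ

/-- The set `N_j = ⋃_{i ≥ 1} {i⁻¹} × [0,1]^j ⊆ ℝ^{j+1}`. -/
def NSet (j : ℕ) : Set (EuclideanSpace ℝ (Fin (j+1))) :=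
  {x | ∃ i : ℕ, 1 ≤ i ∧ x 0 = ((i : ℝ))⁻¹ ∧ ∀ k : Fin (j+1), k ≠ 0 → x k ∈ Set.Icc (0:ℝ) 1}

/-! A Lipschitz graph over a `j`-plane is lower Ahlfors `j`-regular: the graph map `x ↦ x + g x`
does not shrink distances, so `H^j(graph ∩ B(x,r)) ≥ c (r/(1+M))^j` with `c` the `H^j` measure of
the unit ball of `ℝ^j`. For any measure `μ` with `μ(B(x,r)) ≥ c r^s` at the points of `A`, the
balls of a packing are disjoint, so `c · P^s_η(A) ≤ 2^s μ(⋃ balls)`. Cutting `A ⊆ U` (`U` open)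
into dyadic layers by the distance to `Uᶜ` and packing each layer with balls small enough to stay
in a shell of `U` gives `c · P^s(A) ≤ 2^(s+1) μ(U)`, as the shells overlap at most twice. Outer
regularity of `H^j` restricted to the graph then bounds `P^j(A)` by a multiple of `H^j(A)`. -/

open Module

variable {n : ℕ}

theorem packMeasure_le_tsum_packPre {s : ℕ} {A : Set (EuclideanSpace ℝ (Fin n))}
    {D : ℕ → Set (EuclideanSpace ℝ (Fin n))} {η : ℕ → ℝ} (hη : ∀ m, 0 < η m)
    (hA : A ⊆ ⋃ m, D m) : packMeasure s A ≤ ∑' m, packPre s (η m) (D m) :=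
  (iInf₂_le D hA).trans (ENNReal.tsum_le_tsum fun m => iInf₂_le (η m) (hη m))

theorem mul_packPre_le {μ : Measure (EuclideanSpace ℝ (Fin n))} {s : ℕ} {η : ℝ} {c : ℝ≥0∞}
    {D V : Set (EuclideanSpace ℝ (Fin n))}
    (hμ : ∀ x ∈ D, ∀ r, 0 < r → r ≤ η → c * ENNReal.ofReal r ^ s ≤ μ (closedBall x r))
    (hV : ∀ x ∈ D, ∀ r, 0 < r → r ≤ η → closedBall x r ⊆ V) :
    c * packPre s η D ≤ 2 ^ s * μ V := by
  simp only [packPre, ENNReal.mul_iSup]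
  refine iSup₂_le fun P ⟨hP, hPD, hdisj⟩ => ?_
  have hterm : ∀ p : P, c * ENNReal.ofReal (diam (closedBall p.1.1 p.1.2)) ^ s
      ≤ 2 ^ s * μ (closedBall p.1.1 p.1.2) := fun ⟨⟨x, r⟩, hp⟩ => by
    obtain ⟨hx, hr, hrη⟩ := hPD _ hp
    calc c * ENNReal.ofReal (diam (closedBall x r)) ^ s
        ≤ c * ENNReal.ofReal (2 * r) ^ s := by gcongr; exact diam_closedBall hr.le
      _ = 2 ^ s * (c * ENNReal.ofReal r ^ s) := by
        rw [ENNReal.ofReal_mul zero_le_two, ENNReal.ofReal_ofNat, mul_pow]; ring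
      _ ≤ 2 ^ s * μ (closedBall x r) := by gcongr; exact hμ x hx r hr hrη
  calc c * ∑' p : P, ENNReal.ofReal (diam (closedBall p.1.1 p.1.2)) ^ s
      = ∑' p : P, c * ENNReal.ofReal (diam (closedBall p.1.1 p.1.2)) ^ s :=
        ENNReal.tsum_mul_left.symm
    _ ≤ ∑' p : P, 2 ^ s * μ (closedBall p.1.1 p.1.2) := ENNReal.tsum_le_tsum hterm
    _ = 2 ^ s * μ (⋃ p ∈ P, closedBall p.1 p.2) := by
      rw [ENNReal.tsum_mul_left, measure_biUnion hP hdisj fun _ _ => measurableSet_closedBall]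
    _ ≤ 2 ^ s * μ V := by
      gcongr
      exact iUnion₂_subset fun p hp => hV p.1 (hPD p hp).1 p.2 (hPD p hp).2.1 (hPD p hp).2.2

theorem tsum_measure_le_two_mul {α : Type*} [MeasurableSpace α] (μ : Measure α)
    {T : ℕ → Set α} (hT : ∀ m, MeasurableSet (T m))
    (hdisj : ∀ m m', m + 2 ≤ m' → Disjoint (T m) (T m')) :
    ∑' m, μ (T m) ≤ 2 * μ (⋃ m, T m) := by
  have hsub : ∀ f : ℕ → ℕ, (∀ k k', k < k' → f k + 2 ≤ f k') →
      ∑' k, μ (T (f k)) ≤ μ (⋃ m, T m) := fun f hf =>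
    (tsum_meas_le_meas_iUnion_of_disjoint μ (fun k => hT (f k))
      ((pairwise_disjoint_on _).2 fun k k' h => hdisj _ _ (hf k k' h))).trans
      (measure_mono (iUnion_subset fun k => subset_iUnion T (f k)))
  rw [← tsum_even_add_odd ENNReal.summable ENNReal.summable, two_mul]
  exact add_le_add (hsub _ fun k k' h => by omega) (hsub _ fun k k' h => by omega)

theorem exists_lipschitzWith_pos_iff_mem_of_isOpen {X : Type*} [PseudoMetricSpace X] {U : Set X}
    (hU : IsOpen U) : ∃ d : X → ℝ, LipschitzWith 1 d ∧ (∀ x, d x ≤ 1) ∧ ∀ x, 0 < d x ↔ x ∈ U := by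
  rcases Uᶜ.eq_empty_or_nonempty with hUc | hUc
  · refine ⟨fun _ => 1, LipschitzWith.const' 1, fun _ => le_rfl, fun x => ?_⟩
    simp [compl_empty_iff.1 hUc]
  · refine ⟨fun x => min (infDist x Uᶜ) 1, (lipschitz_infDist_pt Uᶜ).min_const 1,
      fun _ => min_le_right _ _, fun x => ?_⟩
    rw [lt_min_iff, ← hU.isClosed_compl.notMem_iff_infDist_pos hUc, mem_compl_iff, not_not]
    simp

theorem mul_packMeasure_le_of_isOpen {μ : Measure (EuclideanSpace ℝ (Fin n))} {s : ℕ}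
    {c : ℝ≥0∞} {A U : Set (EuclideanSpace ℝ (Fin n))}
    (hμ : ∀ x ∈ A, ∀ r, 0 < r → r ≤ 1 → c * ENNReal.ofReal r ^ s ≤ μ (closedBall x r))
    (hU : IsOpen U) (hAU : A ⊆ U) : c * packMeasure s A ≤ 2 ^ (s + 1) * μ U := by
  obtain ⟨d, hd, hd1, hdU⟩ := exists_lipschitzWith_pos_iff_mem_of_isOpen hU
  have hq : ∀ m : ℕ, (0 : ℝ) < 2⁻¹ ^ m := fun m => by positivity
  set D : ℕ → Set (EuclideanSpace ℝ (Fin n)) := fun m => A ∩ d ⁻¹' Ioc (2⁻¹ ^ (m + 1)) (2⁻¹ ^ m)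
  set S : ℕ → Set (EuclideanSpace ℝ (Fin n)) :=
    fun m => U ∩ d ⁻¹' Ioc (3 / 8 * 2⁻¹ ^ m) (9 / 8 * 2⁻¹ ^ m)
  have hcover : A ⊆ ⋃ m, D m := fun x hx => by
    obtain ⟨m, hm⟩ := exists_nat_pow_near_of_lt_one ((hdU x).2 (hAU hx)) (hd1 x)
      (by norm_num : (0 : ℝ) < 2⁻¹) (by norm_num)
    exact mem_iUnion.2 ⟨m, hx, hm⟩
  -- `S m` holds the values of `d` within `2⁻¹ ^ m / 8` of those on `D m`; since `9/32 < 3/8`,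
  -- `S m` and `S (m + 2)` are disjoint.
  have hball : ∀ m, ∀ x ∈ D m, ∀ r, 0 < r → r ≤ 2⁻¹ ^ m / 8 → closedBall x r ⊆ S m := by
    intro m x ⟨_, hxl, hxu⟩ r _ hrm y hy
    have hdxy : |d y - d x| ≤ r := by
      simpa [Real.dist_eq] using (hd.dist_le_mul y x).trans_eq (one_mul _) |>.trans hy
    rw [abs_le] at hdxy
    rw [pow_succ] at hxl
    refine ⟨(hdU y).1 (by linarith [hq m]), by linarith, by linarith⟩
  have hdisj : ∀ m m', m + 2 ≤ m' → Disjoint (S m) (S m') := by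
    intro m m' hmm'
    refine disjoint_left.2 fun y ⟨_, hyl, _⟩ ⟨_, _, hyu'⟩ => ?_
    have : (2⁻¹ : ℝ) ^ m' ≤ 2⁻¹ ^ m / 4 := by
      calc (2⁻¹ : ℝ) ^ m' ≤ 2⁻¹ ^ (m + 2) := pow_le_pow_of_le_one (by norm_num) (by norm_num) hmm'
        _ = 2⁻¹ ^ m / 4 := by rw [pow_add]; ring
    linarith [hq m]
  have hSmeas : ∀ m, MeasurableSet (S m) := fun m =>
    hU.measurableSet.inter (measurableSet_Ioc.preimage hd.continuous.measurable)
  calc c * packMeasure s A ≤ c * ∑' m, packPre s (2⁻¹ ^ m / 8) (D m) := by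
        gcongr; exact packMeasure_le_tsum_packPre (fun m => by positivity) hcover
    _ = ∑' m, c * packPre s (2⁻¹ ^ m / 8) (D m) := ENNReal.tsum_mul_left.symm
    _ ≤ ∑' m, 2 ^ s * μ (S m) := by
        refine ENNReal.tsum_le_tsum fun m => mul_packPre_le (fun x hx r hr hrm => ?_) (hball m)
        refine hμ x hx.1 r hr (hrm.trans ?_)
        have : (2⁻¹ : ℝ) ^ m ≤ 1 := pow_le_one₀ (by norm_num) (by norm_num)
        linarith
    _ = 2 ^ s * ∑' m, μ (S m) := ENNReal.tsum_mul_left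
    _ ≤ 2 ^ s * (2 * μ U) := by
        gcongr
        exact (tsum_measure_le_two_mul μ hSmeas hdisj).trans
          (by gcongr; exact iUnion_subset fun m => inter_subset_left)
    _ = 2 ^ (s + 1) * μ U := by ring

theorem mul_packMeasure_le {μ : Measure (EuclideanSpace ℝ (Fin n))} [μ.OuterRegular] {s : ℕ}
    {c : ℝ≥0∞} {A : Set (EuclideanSpace ℝ (Fin n))}
    (hμ : ∀ x ∈ A, ∀ r, 0 < r → r ≤ 1 → c * ENNReal.ofReal r ^ s ≤ μ (closedBall x r)) :
    c * packMeasure s A ≤ 2 ^ (s + 1) * μ A := by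
  have h0 : (2 : ℝ≥0∞) ^ (s + 1) ≠ 0 := by positivity
  have htop : (2 : ℝ≥0∞) ^ (s + 1) ≠ ⊤ := by simp
  rw [A.measure_eq_iInf_isOpen μ]
  simp only [ENNReal.mul_iInf_of_ne h0 htop]
  exact le_iInf₂ fun U hAU => le_iInf fun hU => mul_packMeasure_le_of_isOpen hμ hU hAU

section Graph

variable {W : Submodule ℝ (EuclideanSpace ℝ (Fin n))} {g : W → Wᗮ} {M : ℝ≥0}

variable (W g) in
def graphMap (x : W) : EuclideanSpace ℝ (Fin n) := x + g x

theorem range_graphMap : range (graphMap W g) = lipGraph W g := by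
  ext p
  simp [graphMap, lipGraph, eq_comm]

theorem lipschitzWith_graphMap (hg : LipschitzWith M g) : LipschitzWith (1 + M) (graphMap W g) := by
  have h := W.subtypeₗᵢ.isometry.lipschitz.add (Wᗮ.subtypeₗᵢ.isometry.lipschitz.comp hg)
  rw [one_mul] at h
  exact h

theorem antilipschitzWith_graphMap : AntilipschitzWith 1 (graphMap W g) := by
  refine AntilipschitzWith.of_le_mul_dist fun x y => ?_
  have horth : inner ℝ ((x - y : W) : EuclideanSpace ℝ (Fin n)) ((g x - g y : Wᗮ) : _) = 0 :=
    Submodule.inner_right_of_mem_orthogonal (x - y).2 (g x - g y).2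
  have hpyth := norm_add_sq_eq_norm_sq_add_norm_sq_real horth
  have hsplit : graphMap W g x - graphMap W g y = ((x - y : W) : EuclideanSpace ℝ (Fin n))
      + ((g x - g y : Wᗮ) : EuclideanSpace ℝ (Fin n)) := by
    simp only [graphMap, Submodule.coe_sub]; abel
  rw [NNReal.coe_one, one_mul, dist_eq_norm, dist_eq_norm, hsplit]
  change ‖((x - y : W) : EuclideanSpace ℝ (Fin n))‖ ≤ _
  exact (mul_self_le_mul_self_iff (norm_nonneg _) (norm_nonneg _)).2
    (hpyth ▸ le_add_of_nonneg_right (mul_self_nonneg _))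

theorem le_hausdorffMeasure_closedBall_inter_lipGraph (hg : LipschitzWith M g) (x : W) {r : ℝ}
    (hr : 0 ≤ r) :
    ENNReal.ofReal (r / (1 + M)) ^ finrank ℝ W *
        μH[finrank ℝ W] (ball (0 : EuclideanSpace ℝ (Fin (finrank ℝ W))) 1)
      ≤ μH[finrank ℝ W] (closedBall (graphMap W g x) r ∩ lipGraph W g) := by
  set ρ := r / (1 + M)
  have hρ : 0 ≤ ρ := by positivity
  have hunit : μH[finrank ℝ W] (ball (0 : EuclideanSpace ℝ (Fin (finrank ℝ W))) 1)
      = μH[finrank ℝ W] (ball (0 : W) 1) := by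
    rw [← (stdOrthonormalBasis ℝ W).repr.isometry.hausdorffMeasure_image (Or.inl (by positivity)),
      LinearIsometryEquiv.image_ball, map_zero]
  have himage : graphMap W g '' closedBall x ρ ⊆ closedBall (graphMap W g x) r ∩ lipGraph W g := by
    rintro _ ⟨y, hy, rfl⟩
    refine ⟨?_, range_graphMap ▸ mem_range_self y⟩
    have := (lipschitzWith_graphMap hg).mapsTo_closedBall x ρ hy
    rwa [NNReal.coe_add, NNReal.coe_one, mul_div_cancel₀ _ (by positivity)] at this
  calc ENNReal.ofReal ρ ^ finrank ℝ W *
        μH[finrank ℝ W] (ball (0 : EuclideanSpace ℝ (Fin (finrank ℝ W))) 1)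
      = μH[finrank ℝ W] (closedBall x ρ) := by
        rw [Measure.addHaar_closedBall _ x hρ, hunit, ENNReal.ofReal_pow hρ]
    _ ≤ μH[finrank ℝ W] (graphMap W g '' closedBall x ρ) := by
        simpa using antilipschitzWith_graphMap.le_hausdorffMeasure_image (by positivity)
          (closedBall x ρ)
    _ ≤ _ := measure_mono himage

theorem hausdorffMeasure_inter_lipGraph_lt_top (hg : LipschitzWith M g)
    {s : Set (EuclideanSpace ℝ (Fin n))} (hs : Bornology.IsBounded s) :
    μH[finrank ℝ W] (s ∩ lipGraph W g) < ⊤ := by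
  rw [← range_graphMap, ← image_preimage_eq_inter_range]
  calc μH[finrank ℝ W] (graphMap W g '' (graphMap W g ⁻¹' s))
      ≤ (1 + M : ℝ≥0∞) ^ (finrank ℝ W : ℝ) * μH[finrank ℝ W] (graphMap W g ⁻¹' s) := by
        simpa using (lipschitzWith_graphMap hg).hausdorffMeasure_image_le (Nat.cast_nonneg _) _
    _ < ⊤ := ENNReal.mul_lt_top (by simp)
        (antilipschitzWith_graphMap.isBounded_preimage hs).measure_lt_top

theorem isLocallyFiniteMeasure_restrict_lipGraph (hg : LipschitzWith M g) :
    IsLocallyFiniteMeasure (μH[finrank ℝ W].restrict (lipGraph W g)) :=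
  ⟨fun x => ⟨closedBall x 1, closedBall_mem_nhds x one_pos, by
    rw [Measure.restrict_apply measurableSet_closedBall]
    exact hausdorffMeasure_inter_lipGraph_lt_top hg isBounded_closedBall⟩⟩

end Graph

theorem pack_le_const_mul_hausdorff_on_graph_general (n j : ℕ) (M : ℝ≥0) :
    ∃ C : ℝ, 0 < C ∧
      ∀ W : Submodule ℝ (EuclideanSpace ℝ (Fin n)), Module.finrank ℝ W = j →
        ∀ g : W → Wᗮ, LipschitzWith M g →
          ∀ A : Set (EuclideanSpace ℝ (Fin n)), A ⊆ lipGraph W g →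
            μH[(j : ℝ)] A < ⊤ →
            packMeasure j A ≤ ENNReal.ofReal C * μH[(j : ℝ)] A := by
  set c : ℝ≥0∞ := ENNReal.ofReal (1 + M)⁻¹ ^ j * μH[j] (ball (0 : EuclideanSpace ℝ (Fin j)) 1)
  have hc0 : c ≠ 0 := mul_ne_zero (pow_ne_zero _ (ENNReal.ofReal_pos.2 (by positivity)).ne')
    (measure_ball_pos _ _ one_pos).ne'
  have hctop : c ≠ ⊤ := ENNReal.mul_ne_top (by simp) measure_ball_lt_top.ne
  refine ⟨(2 ^ (j + 1) / c).toReal, ENNReal.toReal_pos (ENNReal.div_pos (by simp) hctop).ne'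
    (ENNReal.div_ne_top (by simp) hc0), ?_⟩
  rintro W rfl g hg A hAG -
  have : IsLocallyFiniteMeasure (μH[finrank ℝ W].restrict (lipGraph W g)) :=
    isLocallyFiniteMeasure_restrict_lipGraph hg
  have hμ : ∀ x ∈ A, ∀ r, 0 < r → r ≤ 1 → c * ENNReal.ofReal r ^ finrank ℝ W
      ≤ μH[finrank ℝ W].restrict (lipGraph W g) (closedBall x r) := by
    intro x hx r hr _
    obtain ⟨y, rfl⟩ := range_graphMap ▸ hAG hx
    rw [Measure.restrict_apply measurableSet_closedBall]
    refine le_of_eq_of_le ?_ (le_hausdorffMeasure_closedBall_inter_lipGraph hg y hr.le)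
    rw [div_eq_inv_mul, ENNReal.ofReal_mul (by positivity), mul_pow]
    ring
  have key := mul_packMeasure_le hμ
  rw [Measure.restrict_eq_self _ hAG] at key
  rw [ENNReal.ofReal_toReal (ENNReal.div_ne_top (by simp) hc0), ENNReal.div_eq_inv_mul, mul_assoc]
  calc packMeasure (finrank ℝ W) A = c⁻¹ * (c * packMeasure (finrank ℝ W) A) := by
        rw [← mul_assoc, ENNReal.inv_mul_cancel hc0 hctop, one_mul]
    _ ≤ _ := by gcongr

/-- there is `C = C(M,j) > 0` such that for any Lipschitz graph over a
`j`-dimensional plane with Lipschitz constant `M` and any subset `A` of the graph of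
finite `H^j` measure, `P^j(A) ≤ C · H^j(A)`. -/
theorem pack_le_const_mul_hausdorff_on_graph (n j : ℕ) (hj : j ≤ n) (M : ℝ≥0)
    (hM : 0 < M) :
    ∃ C : ℝ, 0 < C ∧
      ∀ W : Submodule ℝ (EuclideanSpace ℝ (Fin n)), Module.finrank ℝ W = j →
        ∀ g : W → Wᗮ, LipschitzWith M g →
          ∀ A : Set (EuclideanSpace ℝ (Fin n)), A ⊆ lipGraph W g →
            μH[(j : ℝ)] A < ⊤ →
            packMeasure j A ≤ ENNReal.ofReal C * μH[(j : ℝ)] A :=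
  pack_le_const_mul_hausdorff_on_graph_general n j M

end ReifenbergPaper
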